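/- arXiv:2211.01416 — 3 statements merged into one kernel-verified Lean document; each statement's English description precedes it below -/
import Mathlib

section
/- Let R be a commutative ring with unity in which 2 is invertible (R = 2R) and let φ be an invertible skew-symmetric matrix of size 2n over R. Then for all v, w ∈ R^{2n−1}: C_φ(v+w) = C_φ(v/2) C_φ(w) C_φ(v/2) and R_φ(v+w) = R_φ(v/2) R_φ(w) R_φ(v/2), where v/2 denotes 2^{−1}·v. -/
/- Common definitions: symplectic groups with respect to an invertible
   skew-symmetric (alternating) matrix, elementary symplectic groups,
   Pfaffian, standard symplectic matrix, elementary linear groups. -/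

namespace PaperESp

open Matrix

variable {R : Type*} [CommRing R]

/-- The Pfaffian of a `2n × 2n` matrix, as the sum over perfect matchings. -/
def pf {n : ℕ} (A : Matrix (Fin (2*n)) (Fin (2*n)) R) : R :=
  ∑ σ ∈ Finset.univ.filter (fun σ : Equiv.Perm (Fin (2*n)) =>
      (∀ k : Fin n, (σ ⟨2*k.1, by have := k.2; omega⟩).1 < (σ ⟨2*k.1+1, by have := k.2; omega⟩).1) ∧
      (∀ k l : Fin n, k < l →
        (σ ⟨2*k.1, by have := k.2; omega⟩).1 < (σ ⟨2*l.1, by have := l.2; omega⟩).1)),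
    ((Equiv.Perm.sign σ : ℤ) : R) *
      ∏ k : Fin n, A (σ ⟨2*k.1, by have := k.2; omega⟩) (σ ⟨2*k.1+1, by have := k.2; omega⟩)

/-- `φ = [[0, -cᵀ],[c, ν]]`: the column `c`. -/
def cvec {n : ℕ} (φ : Matrix (Fin (2*n)) (Fin (2*n)) R) : Fin (2*n-1) → R :=
  fun i => φ ⟨i.1+1, by have := i.2; omega⟩ ⟨0, by have := i.2; omega⟩

/-- `φ = [[0, -cᵀ],[c, ν]]`: the block `ν`. -/
def nuMat {n : ℕ} (φ : Matrix (Fin (2*n)) (Fin (2*n)) R) :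
    Matrix (Fin (2*n-1)) (Fin (2*n-1)) R :=
  Matrix.of fun i j => φ ⟨i.1+1, by have := i.2; omega⟩ ⟨j.1+1, by have := j.2; omega⟩

/-- `φ⁻¹ = [[0, dᵀ],[-d, μ]]`: the row `d`. -/
noncomputable def dvec {n : ℕ} (φ : Matrix (Fin (2*n)) (Fin (2*n)) R) : Fin (2*n-1) → R :=
  fun i => φ⁻¹ ⟨0, by have := i.2; omega⟩ ⟨i.1+1, by have := i.2; omega⟩

/-- `φ⁻¹ = [[0, dᵀ],[-d, μ]]`: the block `μ`. -/
noncomputable def muMat {n : ℕ} (φ : Matrix (Fin (2*n)) (Fin (2*n)) R) :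
    Matrix (Fin (2*n-1)) (Fin (2*n-1)) R :=
  Matrix.of fun i j => φ⁻¹ ⟨i.1+1, by have := i.2; omega⟩ ⟨j.1+1, by have := j.2; omega⟩

/-- Vaserstein's matrix `α_φ(v) = I + d vᵀ ν`. -/
noncomputable def alphaMat {n : ℕ} (φ : Matrix (Fin (2*n)) (Fin (2*n)) R) (v : Fin (2*n-1) → R) :
    Matrix (Fin (2*n-1)) (Fin (2*n-1)) R :=
  1 + Matrix.of fun i j => dvec φ i * ∑ k, v k * nuMat φ k j

/-- Vaserstein's matrix `β_φ(v) = I + μ v cᵀ`. -/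
noncomputable def betaMat {n : ℕ} (φ : Matrix (Fin (2*n)) (Fin (2*n)) R) (v : Fin (2*n-1) → R) :
    Matrix (Fin (2*n-1)) (Fin (2*n-1)) R :=
  1 + Matrix.of fun i j => (∑ k, muMat φ i k * v k) * cvec φ j

/-- The generator `C_φ(v) = [[1, 0],[v, α_φ(v)]]`. -/
noncomputable def Cmat {n : ℕ} (φ : Matrix (Fin (2*n)) (Fin (2*n)) R) (v : Fin (2*n-1) → R) :
    Matrix (Fin (2*n)) (Fin (2*n)) R :=
  Matrix.of fun i j =>
    if hi : i.1 = 0 then (if j.1 = 0 then (1:R) else 0)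
    else if hj : j.1 = 0 then v ⟨i.1-1, by have := i.2; omega⟩
    else alphaMat φ v ⟨i.1-1, by have := i.2; omega⟩ ⟨j.1-1, by have := j.2; omega⟩

/-- The generator `R_φ(v) = [[1, vᵀ],[0, β_φ(v)]]`. -/
noncomputable def Rmat {n : ℕ} (φ : Matrix (Fin (2*n)) (Fin (2*n)) R) (v : Fin (2*n-1) → R) :
    Matrix (Fin (2*n)) (Fin (2*n)) R :=
  Matrix.of fun i j =>
    if hi : i.1 = 0 then (if hj : j.1 = 0 then (1:R) else v ⟨j.1-1, by have := j.2; omega⟩)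
    else if hj : j.1 = 0 then 0
    else betaMat φ v ⟨i.1-1, by have := i.2; omega⟩ ⟨j.1-1, by have := j.2; omega⟩

/-- The symplectic group `Sp_φ(R) = {α ∈ GL_m(R) | αᵀ φ α = φ}`, as a subgroup of the
    units of the matrix ring. -/
def Sp {m : ℕ} (φ : Matrix (Fin m) (Fin m) R) : Subgroup (Matrix (Fin m) (Fin m) R)ˣ where
  carrier := {g | (↑g : Matrix (Fin m) (Fin m) R)ᵀ * φ * (↑g : Matrix (Fin m) (Fin m) R) = φ}
  one_mem' := by simp
  mul_mem' := by
    intro a b ha hb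
    simp only [Set.mem_setOf_eq, Units.val_mul] at *
    have h : ((↑a : Matrix (Fin m) (Fin m) R) * (↑b : Matrix (Fin m) (Fin m) R))ᵀ * φ *
          ((↑a : Matrix (Fin m) (Fin m) R) * (↑b : Matrix (Fin m) (Fin m) R))
        = (↑b : Matrix (Fin m) (Fin m) R)ᵀ *
            ((↑a : Matrix (Fin m) (Fin m) R)ᵀ * φ * (↑a : Matrix (Fin m) (Fin m) R)) *
            (↑b : Matrix (Fin m) (Fin m) R) := by
      simp only [Matrix.transpose_mul, Matrix.mul_assoc]
    rw [h, ha, hb]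
  inv_mem' := by
    intro a ha
    simp only [Set.mem_setOf_eq] at *
    have h : (↑a⁻¹ : Matrix (Fin m) (Fin m) R)ᵀ * φ * (↑a⁻¹ : Matrix (Fin m) (Fin m) R)
        = (↑a⁻¹ : Matrix (Fin m) (Fin m) R)ᵀ *
            ((↑a : Matrix (Fin m) (Fin m) R)ᵀ * φ * (↑a : Matrix (Fin m) (Fin m) R)) *
            (↑a⁻¹ : Matrix (Fin m) (Fin m) R) := by
      rw [ha]
    rw [h]
    have h2 : (↑a⁻¹ : Matrix (Fin m) (Fin m) R)ᵀ *
          ((↑a : Matrix (Fin m) (Fin m) R)ᵀ * φ * (↑a : Matrix (Fin m) (Fin m) R)) *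
          (↑a⁻¹ : Matrix (Fin m) (Fin m) R)
        = ((↑a : Matrix (Fin m) (Fin m) R) * (↑a⁻¹ : Matrix (Fin m) (Fin m) R))ᵀ * φ *
          ((↑a : Matrix (Fin m) (Fin m) R) * (↑a⁻¹ : Matrix (Fin m) (Fin m) R)) := by
      simp only [Matrix.transpose_mul, Matrix.mul_assoc]
    rw [h2, Units.mul_inv]
    simp

/-- The elementary symplectic group `ESp_φ(R)` with respect to `φ`, generated by the
    `C_φ(v)` and `R_φ(v)`. -/
def Esp {n : ℕ} (φ : Matrix (Fin (2*n)) (Fin (2*n)) R) :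
    Subgroup (Matrix (Fin (2*n)) (Fin (2*n)) R)ˣ :=
  Subgroup.closure {g | ∃ v : Fin (2*n-1) → R,
    (↑g : Matrix (Fin (2*n)) (Fin (2*n)) R) = Cmat φ v ∨
    (↑g : Matrix (Fin (2*n)) (Fin (2*n)) R) = Rmat φ v}

/-- `ESp_φ(I)`, generated by the `C_φ(v)`, `R_φ(v)` with `v ∈ I^{2n-1}`. -/
def EspIdeal {n : ℕ} (φ : Matrix (Fin (2*n)) (Fin (2*n)) R) (I : Ideal R) :
    Subgroup (Matrix (Fin (2*n)) (Fin (2*n)) R)ˣ :=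
  Subgroup.closure {g | ∃ v : Fin (2*n-1) → R, (∀ i, v i ∈ I) ∧
    ((↑g : Matrix (Fin (2*n)) (Fin (2*n)) R) = Cmat φ v ∨
     (↑g : Matrix (Fin (2*n)) (Fin (2*n)) R) = Rmat φ v)}

/-- The relative elementary symplectic group `ESp_φ(R,I)`: the normal closure of
    `ESp_φ(I)` in `ESp_φ(R)`. -/
def REsp {n : ℕ} (φ : Matrix (Fin (2*n)) (Fin (2*n)) R) (I : Ideal R) :
    Subgroup (Matrix (Fin (2*n)) (Fin (2*n)) R)ˣ :=
  Subgroup.closure {g | ∃ e ∈ Esp φ, ∃ x ∈ EspIdeal φ I, g = e * x * e⁻¹}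

/-- The standard skew-symmetric matrix `ψ_n = Σ (e_{2i-1,2i} - e_{2i,2i-1})` (1-based). -/
def psi (R : Type*) [CommRing R] (n : ℕ) : Matrix (Fin (2*n)) (Fin (2*n)) R :=
  Matrix.of fun i j =>
    if i.1 + 1 = j.1 ∧ j.1 % 2 = 1 then (1:R)
    else if j.1 + 1 = i.1 ∧ i.1 % 2 = 1 then -1
    else 0

/-- The permutation `σ` of `{1,…,2n}` with `σ(2i-1) = 2i`, `σ(2i) = 2i-1` (0-based swap of
    `2i ↔ 2i+1`). -/
def sigmaFn (n : ℕ) (i : Fin (2*n)) : Fin (2*n) :=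
  if h : i.1 % 2 = 0 then ⟨i.1+1, by have := i.2; omega⟩ else ⟨i.1-1, by have := i.2; omega⟩

/-- The elementary symplectic generators `se_{ij}(a)`. -/
def seMat {R : Type*} [CommRing R] (n : ℕ) (i j : Fin (2*n)) (a : R) :
    Matrix (Fin (2*n)) (Fin (2*n)) R :=
  if i = sigmaFn n j then 1 + Matrix.single i j a
  else 1 + Matrix.single i j a
         - Matrix.single (sigmaFn n j) (sigmaFn n i) ((-1:R)^(i.1+j.1) * a)

/-- The elementary symplectic group `ESp_{2n}(R)`. -/
def Esp2n (R : Type*) [CommRing R] (n : ℕ) : Subgroup (Matrix (Fin (2*n)) (Fin (2*n)) R)ˣ :=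
  Subgroup.closure {g | ∃ i j : Fin (2*n), ∃ a : R, i ≠ j ∧
    (↑g : Matrix (Fin (2*n)) (Fin (2*n)) R) = seMat n i j a}

/-- `ESp_{2n}(I)`. -/
def Esp2nIdeal (R : Type*) [CommRing R] (n : ℕ) (I : Ideal R) :
    Subgroup (Matrix (Fin (2*n)) (Fin (2*n)) R)ˣ :=
  Subgroup.closure {g | ∃ i j : Fin (2*n), ∃ x : R, i ≠ j ∧ x ∈ I ∧
    (↑g : Matrix (Fin (2*n)) (Fin (2*n)) R) = seMat n i j x}

/-- The relative elementary symplectic group `ESp_{2n}(R,I)`: the normal closure of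
    `ESp_{2n}(I)` in `ESp_{2n}(R)`. -/
def REsp2n (R : Type*) [CommRing R] (n : ℕ) (I : Ideal R) :
    Subgroup (Matrix (Fin (2*n)) (Fin (2*n)) R)ˣ :=
  Subgroup.closure {g | ∃ e ∈ Esp2n R n, ∃ x ∈ Esp2nIdeal R n I, g = e * x * e⁻¹}

/-- The elementary linear group `E_m(R)`. -/
def Egrp (R : Type*) [CommRing R] (m : ℕ) : Subgroup (Matrix (Fin m) (Fin m) R)ˣ :=
  Subgroup.closure {g | ∃ i j : Fin m, ∃ a : R, i ≠ j ∧
    (↑g : Matrix (Fin m) (Fin m) R) = 1 + Matrix.single i j a}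

/-- `E_m(I)`. -/
def EgrpIdeal (R : Type*) [CommRing R] (m : ℕ) (I : Ideal R) :
    Subgroup (Matrix (Fin m) (Fin m) R)ˣ :=
  Subgroup.closure {g | ∃ i j : Fin m, ∃ x : R, i ≠ j ∧ x ∈ I ∧
    (↑g : Matrix (Fin m) (Fin m) R) = 1 + Matrix.single i j x}

/-- The relative elementary linear group `E_m(R,I)`: the normal closure of `E_m(I)`
    in `E_m(R)`. -/
def REgrp (R : Type*) [CommRing R] (m : ℕ) (I : Ideal R) :
    Subgroup (Matrix (Fin m) (Fin m) R)ˣ :=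
  Subgroup.closure {g | ∃ e ∈ Egrp R m, ∃ x ∈ EgrpIdeal R m I, g = e * x * e⁻¹}

/-- `1 ⊥ β`: the block diagonal matrix `diag(1, β)` of size `2n`. -/
def onePerp {n : ℕ} (β : Matrix (Fin (2*n-1)) (Fin (2*n-1)) R) :
    Matrix (Fin (2*n)) (Fin (2*n)) R :=
  Matrix.of fun i j =>
    if hi : i.1 = 0 then (if j.1 = 0 then (1:R) else 0)
    else if hj : j.1 = 0 then 0
    else β ⟨i.1-1, by have := i.2; omega⟩ ⟨j.1-1, by have := j.2; omega⟩

/-- The congruence kernel: invertible matrices reducing to the identity modulo `I`. -/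
def congrKer (R : Type*) [CommRing R] (m : ℕ) (I : Ideal R) :
    Subgroup (Matrix (Fin m) (Fin m) R)ˣ :=
  (Units.map ((Ideal.Quotient.mk I).mapMatrix.toMonoidHom :
      Matrix (Fin m) (Fin m) R →* Matrix (Fin m) (Fin m) (R ⧸ I))).ker

/-- `Sp_φ(R,I)`: the kernel of the reduction map `Sp_φ(R) → Sp_φ(R/I)`. -/
def SpRel {m : ℕ} (φ : Matrix (Fin m) (Fin m) R) (I : Ideal R) :
    Subgroup (Matrix (Fin m) (Fin m) R)ˣ :=
  Sp φ ⊓ congrKer R m I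


/-!
After splitting off the first coordinate, `C_φ(v)` is the block matrix
`[[1, 0], [v, 1 + d (vᵀ ν)]]`, and `R_φ(v)ᵀ` has the same shape with `d, ν` replaced by `c, μᵀ`.
For such matrices two facts give `C(u + w + u) = C(u) C(w) C(u)`: `ν d = 0` makes the lower
right blocks multiply additively, and `ν` being alternating (skew-symmetric, with `2` invertible)
kills the cross term `d (uᵀ ν w + (u + w)ᵀ ν u)` in the lower left block. The identities
`ν d = 0` and `μ c = 0` are the first columns of `φ φ⁻¹ = 1` and `φ⁻¹ φ = 1`, since the corner
entries of the skew-symmetric matrices `φ` and `φ⁻¹` vanish. Taking `u = v / 2` gives the theorem.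
-/

section SkewSymmetric

variable {ι : Type*}

lemma eq_zero_of_eq_neg [Invertible (2 : R)] {a : R} (h : a = -a) : a = 0 := by
  have h2 : (2 : R) * a = 0 := by linear_combination h
  rw [← invOf_mul_cancel_left (2 : R) a, h2, mul_zero]

lemma apply_self_eq_zero_of_transpose_eq_neg [Invertible (2 : R)] {A : Matrix ι ι R}
    (hA : Aᵀ = -A) (i : ι) : A i i = 0 :=
  eq_zero_of_eq_neg (congr_fun₂ hA i i)

variable [Fintype ι]

lemma dotProduct_mulVec_self_eq_zero [Invertible (2 : R)] {N : Matrix ι ι R} (hN : Nᵀ = -N)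
    (v : ι → R) : v ⬝ᵥ N *ᵥ v = 0 := by
  have h : v ⬝ᵥ Nᵀ *ᵥ v = v ⬝ᵥ N *ᵥ v := by
    rw [mulVec_transpose, dotProduct_comm, dotProduct_mulVec]
  rw [hN, neg_mulVec, dotProduct_neg] at h
  exact eq_zero_of_eq_neg h.symm

lemma transpose_nonsing_inv_eq_neg [DecidableEq ι] {A : Matrix ι ι R} (hA : Aᵀ = -A)
    (hAu : IsUnit A) : A⁻¹ᵀ = -A⁻¹ := by
  rw [transpose_nonsing_inv, hA]
  exact inv_eq_left_inv
    (by rw [neg_mul_neg, nonsing_inv_mul _ ((isUnit_iff_isUnit_det A).mp hAu)])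

end SkewSymmetric

section LowerGen

variable {ι : Type*} [Fintype ι] [DecidableEq ι]

lemma one_add_vecMulVec_mul_one_add_vecMulVec {x y x' y' : ι → R} (h : y ⬝ᵥ x' = 0) :
    (1 + vecMulVec x y) * (1 + vecMulVec x' y') = 1 + vecMulVec x y + vecMulVec x' y' := by
  rw [add_mul, mul_add, mul_add, vecMulVec_mul_vecMulVec, h, zero_smul, vecMulVec_zero]
  simp only [one_mul, mul_one, add_zero]
  abel

lemma one_add_vecMulVec_mulVec (x y v : ι → R) :
    (1 + vecMulVec x y) *ᵥ v = v + (y ⬝ᵥ v) • x := by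
  rw [add_mulVec, one_mulVec, vecMulVec_mulVec, op_smul_eq_smul]

def lowerGen (d : ι → R) (N : Matrix ι ι R) (v : ι → R) :
    Matrix (Fin 1 ⊕ ι) (Fin 1 ⊕ ι) R :=
  fromBlocks 1 0 (replicateCol (Fin 1) v) (1 + vecMulVec d (v ᵥ* N))

theorem lowerGen_add_add {d : ι → R} {N : Matrix ι ι R} (hNd : N *ᵥ d = 0)
    (hN : ∀ v, v ⬝ᵥ N *ᵥ v = 0) (u w : ι → R) :
    lowerGen d N (u + w + u) = lowerGen d N u * lowerGen d N w * lowerGen d N u := by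
  have hmul : ∀ a b, (1 + vecMulVec d (a ᵥ* N)) * (1 + vecMulVec d (b ᵥ* N))
      = 1 + vecMulVec d ((a + b) ᵥ* N) := fun a b => by
    rw [one_add_vecMulVec_mul_one_add_vecMulVec
        (by rw [← dotProduct_mulVec, hNd, dotProduct_zero]),
      add_vecMul, vecMulVec_add, add_assoc]
  have hpolar : (u ᵥ* N) ⬝ᵥ w + ((u + w) ᵥ* N) ⬝ᵥ u = 0 := by
    have h₁ := hN (u + w)
    have h₂ := hN w
    simp only [← dotProduct_mulVec, mulVec_add, add_dotProduct, dotProduct_add] at h₁ h₂ ⊢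
    linear_combination h₁ - h₂
  simp only [lowerGen, fromBlocks_multiply, Matrix.mul_one, Matrix.mul_zero,
    Matrix.zero_mul, add_zero, zero_add, hmul]
  congr 1
  rw [← replicateCol_mulVec, ← replicateCol_mulVec, ← replicateCol_add, ← replicateCol_add,
    one_add_vecMulVec_mulVec, one_add_vecMulVec_mulVec]
  congr 1
  linear_combination (norm := module) -(hpolar • d)

lemma toBlocks₂₂_mulVec_eq_zero_of_mul_eq_one {A B : Matrix (Fin 1 ⊕ ι) (Fin 1 ⊕ ι) R}
    (hAB : A * B = 1) (hB : B (.inl 0) (.inl 0) = 0) :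
    A.toBlocks₂₂ *ᵥ (fun k => B (.inr k) (.inl 0)) = 0 := by
  ext i
  have h := congr_fun₂ hAB (.inr i) (.inl 0)
  simpa [mul_apply, Fintype.sum_sum_type, hB, mulVec, dotProduct, toBlocks₂₂] using h

end LowerGen

def finOneSumEquiv (m : ℕ) (hm : 0 < m) : Fin 1 ⊕ Fin (m - 1) ≃ Fin m where
  toFun := Sum.elim (fun _ => ⟨0, hm⟩) (fun k => ⟨k.1 + 1, by omega⟩)
  invFun i := if h : i.1 = 0 then .inl 0 else .inr ⟨i.1 - 1, by omega⟩
  left_inv s := by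
    rcases s with a | k
    · simp [Fin.fin_one_eq_zero a]
    · simp
  right_inv i := by
    by_cases h : i.1 = 0
    · simp [h, Fin.ext_iff]
    · simp only [dif_neg h, Sum.elim_inr, Fin.ext_iff]
      omega

section Symplectic

variable {n : ℕ} {φ : Matrix (Fin (2*n)) (Fin (2*n)) R}

lemma submatrix_Cmat (hn : 0 < 2 * n) (v : Fin (2*n-1) → R) :
    (Cmat φ v).submatrix (finOneSumEquiv (2*n) hn) (finOneSumEquiv (2*n) hn)
      = lowerGen (dvec φ) (nuMat φ) v := by
  ext (i | i) (j | j)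
  all_goals simp [Cmat, lowerGen, finOneSumEquiv, alphaMat, vecMulVec, vecMul, dotProduct,
    one_apply, Fin.fin_one_eq_zero, Fin.val_inj]

lemma submatrix_Rmat (hn : 0 < 2 * n) (v : Fin (2*n-1) → R) :
    (Rmat φ v).submatrix (finOneSumEquiv (2*n) hn) (finOneSumEquiv (2*n) hn)
      = (lowerGen (cvec φ) (muMat φ)ᵀ v)ᵀ := by
  ext (i | i) (j | j)
  all_goals simp [Rmat, lowerGen, finOneSumEquiv, betaMat, vecMulVec, vecMul, dotProduct,
    one_apply, Fin.fin_one_eq_zero, Fin.val_inj, eq_comm, Finset.mul_sum, mul_comm,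
    mul_left_comm]

lemma nuMat_transpose (hskew : φᵀ = -φ) : (nuMat φ)ᵀ = -nuMat φ := by
  ext i j
  exact congr_fun₂ hskew _ _

lemma muMat_transpose (hskew : φᵀ = -φ) (hinv : IsUnit φ) : (muMat φ)ᵀ = -muMat φ := by
  ext i j
  exact congr_fun₂ (transpose_nonsing_inv_eq_neg hskew hinv) _ _

variable [Invertible (2 : R)]

lemma nuMat_mulVec_dvec (hskew : φᵀ = -φ) (hinv : IsUnit φ) (hn : 0 < 2 * n) :
    nuMat φ *ᵥ dvec φ = 0 := by
  set e := finOneSumEquiv (2*n) hn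
  have hinvskew := transpose_nonsing_inv_eq_neg hskew hinv
  have h := toBlocks₂₂_mulVec_eq_zero_of_mul_eq_one
    (A := φ.submatrix e e) (B := φ⁻¹.submatrix e e)
    (by rw [submatrix_mul_equiv, mul_nonsing_inv _ ((isUnit_iff_isUnit_det φ).mp hinv),
      submatrix_one_equiv])
    (apply_self_eq_zero_of_transpose_eq_neg hinvskew _)
  have hcol : (fun k => φ⁻¹.submatrix e e (.inr k) (.inl 0)) = -dvec φ := by
    ext k
    exact congr_fun₂ hinvskew _ _
  rwa [hcol, mulVec_neg, neg_eq_zero] at h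

lemma muMat_transpose_mulVec_cvec (hskew : φᵀ = -φ) (hinv : IsUnit φ) (hn : 0 < 2 * n) :
    (muMat φ)ᵀ *ᵥ cvec φ = 0 := by
  set e := finOneSumEquiv (2*n) hn
  have h := toBlocks₂₂_mulVec_eq_zero_of_mul_eq_one
    (A := φ⁻¹.submatrix e e) (B := φ.submatrix e e)
    (by rw [submatrix_mul_equiv, nonsing_inv_mul _ ((isUnit_iff_isUnit_det φ).mp hinv),
      submatrix_one_equiv])
    (apply_self_eq_zero_of_transpose_eq_neg hskew _)
  rw [muMat_transpose hskew hinv, neg_mulVec]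
  exact neg_eq_zero.mpr h

theorem Cmat_add_add (hskew : φᵀ = -φ) (hinv : IsUnit φ) (hn : 0 < 2 * n)
    (u w : Fin (2*n-1) → R) : Cmat φ (u + w + u) = Cmat φ u * Cmat φ w * Cmat φ u := by
  apply (reindex (finOneSumEquiv (2*n) hn).symm (finOneSumEquiv (2*n) hn).symm).injective
  simp only [reindex_apply, Equiv.symm_symm,
    ← submatrix_mul_equiv _ _ _ (finOneSumEquiv (2*n) hn), submatrix_Cmat]
  exact lowerGen_add_add (nuMat_mulVec_dvec hskew hinv hn)
    (dotProduct_mulVec_self_eq_zero (nuMat_transpose hskew)) u w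

theorem Rmat_add_add (hskew : φᵀ = -φ) (hinv : IsUnit φ) (hn : 0 < 2 * n)
    (u w : Fin (2*n-1) → R) : Rmat φ (u + w + u) = Rmat φ u * Rmat φ w * Rmat φ u := by
  apply (reindex (finOneSumEquiv (2*n) hn).symm (finOneSumEquiv (2*n) hn).symm).injective
  simp only [reindex_apply, Equiv.symm_symm,
    ← submatrix_mul_equiv _ _ _ (finOneSumEquiv (2*n) hn), submatrix_Rmat]
  have hμ : (muMat φ)ᵀᵀ = -(muMat φ)ᵀ := by
    rw [transpose_transpose, muMat_transpose hskew hinv, neg_neg]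
  rw [lowerGen_add_add (muMat_transpose_mulVec_cvec hskew hinv hn)
    (dotProduct_mulVec_self_eq_zero hμ), transpose_mul, transpose_mul, Matrix.mul_assoc]

end Symplectic

/-- splitting property of the generators `C_φ(v)` and `R_φ(v)`:
`C_φ(v+w) = C_φ(v/2) C_φ(w) C_φ(v/2)` and `R_φ(v+w) = R_φ(v/2) R_φ(w) R_φ(v/2)`. -/
theorem generators_splitting {R : Type*} [CommRing R] [Invertible (2 : R)] (n : ℕ)
    (φ : Matrix (Fin (2*n)) (Fin (2*n)) R) (hskew : φᵀ = -φ) (hinv : IsUnit φ) :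
    ∀ v w : Fin (2*n-1) → R,
      Cmat φ (v + w) = Cmat φ ((⅟(2:R)) • v) * Cmat φ w * Cmat φ ((⅟(2:R)) • v) ∧
      Rmat φ (v + w) = Rmat φ ((⅟(2:R)) • v) * Rmat φ w * Rmat φ ((⅟(2:R)) • v) := by
  intro v w
  obtain hn | hn := (2 * n).eq_zero_or_pos
  · exact ⟨ext fun i => absurd i.2 (by omega), ext fun i => absurd i.2 (by omega)⟩
  have hv : ⅟(2:R) • v + w + ⅟(2:R) • v = v + w := by
    rw [add_right_comm, ← add_smul, invOf_two_add_invOf_two, one_smul]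
  rw [← hv]
  exact ⟨Cmat_add_add hskew hinv hn _ _, Rmat_add_add hskew hinv hn _ _⟩

end PaperESp
end

section
/- Let R be a commutative ring with unity in which 2 is invertible (R = 2R) and let φ be an invertible skew-symmetric matrix of size 2n over R. Then in the polynomial ring R[X] with the ideal (X): ESp_{φ⊗R[X]}(R[X], (X)) = ESp_{φ⊗R[X]}(R[X]) ∩ Sp_{φ⊗R[X]}(R[X], (X)). -/
/- Common definitions: symplectic groups with respect to an invertible
   skew-symmetric (alternating) matrix, elementary symplectic groups,
   Pfaffian, standard symplectic matrix, elementary linear groups. -/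

namespace PaperESp

open Matrix

variable {R : Type*} [CommRing R]

/-!
The retraction `ε = C ∘ eval₀` of `R[X]` onto `R` has kernel `(X)` and fixes `φ`, so it acts
on `ESp_φ(R[X])`. Each generator factors as `s = t · ε(s)` with `t` a generator of
`ESp_φ((X))`: this comes from the composition law `C_φ(u) C_φ(w) = C_φ(u + w + (uᵀ ν w) d)`,
from `C_φ(v)⁻¹ = C_φ(-v)` (as `vᵀ ν v = 0` for the skew `ν` once `2` is a unit), and from
`R_φ(v) = C_{φ⁻¹}(v)ᵀ`. Induction on words gives `g ε(g)⁻¹ ∈ ESp_φ(R[X], (X))` for all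
`g ∈ ESp_φ(R[X])`, and `ε(g) = 1` when `g ≡ 1 mod X`. The other inclusion holds because the
generators are symplectic and those of `ESp_φ((X))` are `≡ 1 mod X`. Identities between the
generators are checked on the blocks of the decomposition `2n = 1 + (2n - 1)`.
-/

open Subgroup

section RelativeNormalClosure

variable {G : Type*} [Group G]

/-- The normal closure of `K` in `H`. -/
def relNormalClosure (H K : Subgroup G) : Subgroup G :=
  closure {g | ∃ h ∈ H, ∃ k ∈ K, g = h * k * h⁻¹}

lemma le_relNormalClosure (H K : Subgroup G) : K ≤ relNormalClosure H K :=
  fun k hk => subset_closure ⟨1, one_mem H, k, hk, by group⟩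

lemma conj_mem_relNormalClosure {H K : Subgroup G} {h x : G} (hh : h ∈ H)
    (hx : x ∈ relNormalClosure H K) : h * x * h⁻¹ ∈ relNormalClosure H K := by
  suffices relNormalClosure H K ≤ (relNormalClosure H K).comap (MulAut.conj h).toMonoidHom from
    this hx
  refine closure_le _ |>.mpr ?_
  rintro _ ⟨h', hh', k, hk, rfl⟩
  exact subset_closure ⟨h * h', mul_mem hh hh', k, hk, by simp [MulAut.conj_apply]; group⟩

lemma relNormalClosure_le {H K M : Subgroup G} (hK : K ≤ M)
    (hM : ∀ h ∈ H, ∀ x ∈ M, h * x * h⁻¹ ∈ M) : relNormalClosure H K ≤ M :=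
  closure_le _ |>.mpr fun _ ⟨h, hh, k, hk, hg⟩ => hg ▸ hM h hh k (hK hk)

lemma retraction_mem_closure_and_mul_inv_mem {X : Set G} {K : Subgroup G} (E : G →* G)
    (hX : ∀ s ∈ X, E s ∈ closure X ∧ s * (E s)⁻¹ ∈ K) {g : G} (hg : g ∈ closure X) :
    E g ∈ closure X ∧ g * (E g)⁻¹ ∈ relNormalClosure (closure X) K := by
  induction hg using closure_induction with
  | mem s hs => exact ⟨(hX s hs).1, le_relNormalClosure _ _ (hX s hs).2⟩
  | one => simp [one_mem]
  | mul x y _ _ hx hy =>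
    refine ⟨by rw [map_mul]; exact mul_mem hx.1 hy.1, ?_⟩
    have : x * y * (E (x * y))⁻¹ = x * (E x)⁻¹ * (E x * (y * (E y)⁻¹) * (E x)⁻¹) := by
      rw [map_mul]; group
    rw [this]
    exact mul_mem hx.2 (conj_mem_relNormalClosure hx.1 hy.2)
  | inv x hxX hx =>
    refine ⟨by rw [map_inv]; exact inv_mem hx.1, ?_⟩
    have : x⁻¹ * (E x⁻¹)⁻¹ = x⁻¹ * (x * (E x)⁻¹)⁻¹ * x⁻¹⁻¹ := by
      rw [map_inv]; group
    rw [this]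
    exact conj_mem_relNormalClosure (inv_mem hxX) (inv_mem hx.2)

lemma mem_relNormalClosure_of_retraction {X : Set G} {K : Subgroup G} (E : G →* G)
    (hX : ∀ s ∈ X, E s ∈ closure X ∧ s * (E s)⁻¹ ∈ K) {g : G} (hg : g ∈ closure X)
    (hEg : E g = 1) : g ∈ relNormalClosure (closure X) K := by
  simpa [hEg] using (retraction_mem_closure_and_mul_inv_mem E hX hg).2

end RelativeNormalClosure

section MatrixFacts

variable {S : Type*} [CommRing S] {m : Type*} [Fintype m]

lemma transpose_eq_self_of_subsingleton {α k : Type*} [Subsingleton k] (M : Matrix k k α) :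
    Mᵀ = M := by
  ext i j
  rw [Subsingleton.elim i j, transpose_apply]

lemma transpose_mul_mul_self_eq_zero (h2 : IsUnit (2 : S)) {ν : Matrix m m S} (hν : νᵀ = -ν)
    {k : Type*} [Subsingleton k] (v : Matrix m k S) : vᵀ * ν * v = 0 := by
  have h : (vᵀ * ν * v)ᵀ = -(vᵀ * ν * v) := by
    simp [transpose_mul, hν, Matrix.mul_assoc]
  rw [transpose_eq_self_of_subsingleton, eq_neg_iff_add_eq_zero, ← two_smul S] at h
  exact h2.smul_eq_zero.mp h

lemma dotProduct_mulVec_self_eq_zero_s13 (h2 : IsUnit (2 : S)) {ν : Matrix m m S} (hν : νᵀ = -ν)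
    (u : m → S) : u ⬝ᵥ ν *ᵥ u = 0 := by
  have h : u ⬝ᵥ ν *ᵥ u = -(u ⬝ᵥ ν *ᵥ u) := by
    conv_lhs => rw [dotProduct_mulVec, dotProduct_comm, ← mulVec_transpose, hν, neg_mulVec,
      dotProduct_neg]
  rw [eq_neg_iff_add_eq_zero, ← two_mul] at h
  exact h2.mul_right_eq_zero.mp h

lemma mul_mul_eq_of_mul_eq {l n p q : Type*} [Fintype n] [Fintype p] {A : Matrix l n S}
    {B : Matrix n p S} {C : Matrix l p S} (h : A * B = C) (Z : Matrix p q S) :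
    A * (B * Z) = C * Z := by
  rw [← Matrix.mul_assoc, h]

lemma transpose_mul_eq_zero_of_mul_eq_zero {k : Type*} {d : Matrix m k S} {ν : Matrix m m S}
    (hν : νᵀ = -ν) (hνd : ν * d = 0) : dᵀ * ν = 0 := by
  rw [← transpose_transpose ν, ← transpose_mul, hν, Matrix.neg_mul, hνd, neg_zero,
    transpose_zero]

lemma nonsing_inv_transpose_of_skew [DecidableEq m] {ψ : Matrix m m S} (hskew : ψᵀ = -ψ)
    (hψ : IsUnit ψ) : ψ⁻¹ᵀ = -ψ⁻¹ := by
  rw [transpose_nonsing_inv, hskew]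
  refine inv_eq_right_inv ?_
  rw [neg_mul_neg, mul_nonsing_inv _ ((isUnit_iff_isUnit_det ψ).mp hψ)]

lemma map_nonsing_inv [DecidableEq m] {T : Type*} [CommRing T] (f : S →+* T) {ψ : Matrix m m S}
    (hψ : IsUnit ψ) : (ψ.map f)⁻¹ = ψ⁻¹.map f := by
  refine inv_eq_right_inv ?_
  rw [← Matrix.map_mul, mul_nonsing_inv _ ((isUnit_iff_isUnit_det ψ).mp hψ), Matrix.map_one _
    f.map_zero f.map_one]

lemma mul_mul_transpose_of_transpose_mul_inv_mul [DecidableEq m] {ψ A : Matrix m m S}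
    (hψ : IsUnit ψ) (h : Aᵀ * ψ⁻¹ * A = ψ⁻¹) : A * ψ * Aᵀ = ψ := by
  have hdet := (isUnit_iff_isUnit_det ψ).mp hψ
  have hleft : Aᵀ * ψ⁻¹ * (A * ψ) = 1 := by
    rw [← Matrix.mul_assoc, h, nonsing_inv_mul _ hdet]
  have hright : A * ψ * Aᵀ * ψ⁻¹ = 1 := by rw [Matrix.mul_assoc, mul_eq_one_comm.mp hleft]
  rw [← Matrix.mul_one (A * ψ * Aᵀ), ← nonsing_inv_mul _ hdet, ← Matrix.mul_assoc, hright,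
    Matrix.one_mul]

lemma map_eq_one_of_mem_congrKer {T : Type*} [CommRing T] {I : Ideal S} (f : S →+* T)
    (hf : I ≤ RingHom.ker f) {k : ℕ} {g : (Matrix (Fin k) (Fin k) S)ˣ}
    (hg : g ∈ congrKer S k I) : (g : Matrix (Fin k) (Fin k) S).map f = 1 := by
  have hmk : (g : Matrix (Fin k) (Fin k) S).map (Ideal.Quotient.mk I) = 1 :=
    congrArg Units.val (MonoidHom.mem_ker.mp hg)
  have hf' : f = (Ideal.Quotient.lift I f fun a ha => RingHom.mem_ker.mp (hf ha)).comp
      (Ideal.Quotient.mk I) :=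
    (Ideal.Quotient.lift_comp_mk I f _).symm
  rw [hf', RingHom.coe_comp, ← Matrix.map_map, hmk, Matrix.map_one _ (map_zero _) (map_one _)]

end MatrixFacts

section Blocks

variable {S : Type*} [CommRing S] {m : Type*} [Fintype m] [DecidableEq m]

/-- `[[0, -cᵀ], [c, ν]]`: both `φ` and `φ⁻¹ = [[0, dᵀ], [-d, μ]]` have this shape. -/
def skewBlocks (c : Matrix m (Fin 1) S) (ν : Matrix m m S) :
    Matrix (Fin 1 ⊕ m) (Fin 1 ⊕ m) S :=
  fromBlocks 0 (-cᵀ) c ν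

/-- `C_φ(v)` in block form. -/
def cBlocks (d : Matrix m (Fin 1) S) (ν : Matrix m m S) (v : Matrix m (Fin 1) S) :
    Matrix (Fin 1 ⊕ m) (Fin 1 ⊕ m) S :=
  fromBlocks 1 0 v (1 + d * (vᵀ * ν))

lemma skewBlocks_mul_eq_one {c c' : Matrix m (Fin 1) S} {ν ν' : Matrix m m S}
    (h : skewBlocks c ν * skewBlocks c' ν' = 1) : cᵀ * c' = -1 ∧ ν * c' = 0 := by
  rw [skewBlocks, skewBlocks, fromBlocks_multiply, ← fromBlocks_one, fromBlocks_inj] at h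
  obtain ⟨h1, -, h3, -⟩ := h
  simp only [Matrix.mul_zero, zero_add, Matrix.neg_mul] at h1 h3
  exact ⟨neg_eq_iff_eq_neg.mp h1, h3⟩

lemma cBlocks_mul {d : Matrix m (Fin 1) S} {ν : Matrix m m S} (hν : νᵀ = -ν)
    (hνd : ν * d = 0) (u w : Matrix m (Fin 1) S) :
    cBlocks d ν u * cBlocks d ν w = cBlocks d ν (u + w + d * (uᵀ * ν * w)) := by
  have hdν := transpose_mul_eq_zero_of_mul_eq_zero hν hνd
  simp only [cBlocks, fromBlocks_multiply, Matrix.mul_zero, Matrix.one_mul, Matrix.mul_one,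
    add_zero, zero_add, Matrix.add_mul, Matrix.mul_add, transpose_add, Matrix.mul_assoc,
    transpose_mul, mul_mul_eq_of_mul_eq hνd, hdν, hν, transpose_transpose, Matrix.neg_mul,
    Matrix.mul_neg, Matrix.zero_mul, neg_zero]
  congr 1 <;> abel

lemma cBlocks_transpose_mul_skewBlocks_mul {c d : Matrix m (Fin 1) S} {ν : Matrix m m S}
    (hν : νᵀ = -ν) (hcd : cᵀ * d = 1) (hνd : ν * d = 0) {v : Matrix m (Fin 1) S}
    (hq : vᵀ * ν * v = 0) :
    (cBlocks d ν v)ᵀ * skewBlocks c ν * cBlocks d ν v = skewBlocks c ν := by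
  have hdν := transpose_mul_eq_zero_of_mul_eq_zero hν hνd
  have hdc : dᵀ * c = 1 := by
    rw [← transpose_transpose c, ← transpose_mul, hcd, transpose_one]
  have hvc : vᵀ * c = cᵀ * v := by
    rw [← transpose_eq_self_of_subsingleton (cᵀ * v), transpose_mul, transpose_transpose]
  rw [Matrix.mul_assoc] at hq
  simp only [cBlocks, skewBlocks, fromBlocks_transpose, fromBlocks_multiply, transpose_one,
    transpose_zero, transpose_add, transpose_mul, hν, transpose_transpose, Matrix.mul_zero,
    Matrix.one_mul, Matrix.mul_one, add_zero, zero_add, Matrix.add_mul, Matrix.mul_add,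
    Matrix.mul_assoc, Matrix.zero_mul, Matrix.neg_mul, Matrix.mul_neg, neg_zero,
    mul_mul_eq_of_mul_eq hνd, mul_mul_eq_of_mul_eq hcd, hdν, hdc, hvc, hq]
  congr 1 <;> abel

end Blocks

section Generators

variable {S : Type*} [CommRing S] {n : ℕ}

local notation "col" => replicateCol (Fin 1)

def splitFirst (hn : 0 < n) : Fin (2*n) ≃ Fin 1 ⊕ Fin (2*n-1) where
  toFun i := if i.1 = 0 then .inl 0 else .inr ⟨i.1 - 1, by omega⟩
  invFun := Sum.elim (fun _ => ⟨0, by omega⟩) (fun j => ⟨j.1 + 1, by omega⟩)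
  left_inv i := by
    by_cases h : i.1 = 0
    · simp [h, Fin.ext_iff]
    · simp [h, Fin.ext_iff]; omega
  right_inv x := by
    rcases x with x | j
    · simp [Subsingleton.elim x 0]
    · simp

noncomputable abbrev blockEquiv (hn : 0 < n) :
    Matrix (Fin (2*n)) (Fin (2*n)) S ≃+*
      Matrix (Fin 1 ⊕ Fin (2*n-1)) (Fin 1 ⊕ Fin (2*n-1)) S :=
  reindexRingEquiv S (splitFirst hn)

lemma blockEquiv_transpose (hn : 0 < n) (A : Matrix (Fin (2*n)) (Fin (2*n)) S) :
    blockEquiv hn Aᵀ = (blockEquiv hn A)ᵀ :=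
  rfl

/-- For `n = 0` there is no block decomposition, but then all matrices are equal. -/
lemma eq_of_blockEquiv_eq {A B : Matrix (Fin (2*n)) (Fin (2*n)) S}
    (h : ∀ hn : 0 < n, blockEquiv hn A = blockEquiv hn B) : A = B := by
  rcases n.eq_zero_or_pos with rfl | hn
  · ext i
    exact absurd i.2 (by omega)
  · exact (blockEquiv hn).injective (h hn)

lemma blockEquiv_Cmat (hn : 0 < n) (ψ : Matrix (Fin (2*n)) (Fin (2*n)) S) (v : Fin (2*n-1) → S) :
    blockEquiv hn (Cmat ψ v) = cBlocks (col (dvec ψ)) (nuMat ψ) (col v) := by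
  ext (i | i) (j | j) <;>
    simp [cBlocks, Cmat, splitFirst, alphaMat, mul_apply, Finset.mul_sum, one_apply, Fin.val_inj,
      Fin.fin_one_eq_zero]

lemma blockEquiv_of_skew (hn : 0 < n) (h2 : IsUnit (2 : S))
    {ψ : Matrix (Fin (2*n)) (Fin (2*n)) S} (hskew : ψᵀ = -ψ) :
    blockEquiv hn ψ = skewBlocks (col (cvec ψ)) (nuMat ψ) := by
  have hs : ∀ i j, ψ j i = -ψ i j := fun i j => by simpa using congrFun (congrFun hskew i) j
  ext (i | i) (j | j)
  · have h00 := hs ⟨0, by omega⟩ ⟨0, by omega⟩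
    rw [eq_neg_iff_add_eq_zero, ← two_mul] at h00
    simpa [skewBlocks, splitFirst] using h2.mul_right_eq_zero.mp h00
  · simpa [skewBlocks, splitFirst, cvec] using hs _ _
  · simp [skewBlocks, splitFirst, cvec]
  · simp [skewBlocks, splitFirst, nuMat]

lemma nuMat_transpose_s13 {ψ : Matrix (Fin (2*n)) (Fin (2*n)) S} (hskew : ψᵀ = -ψ) :
    (nuMat ψ)ᵀ = -nuMat ψ := by
  ext i j
  simpa [nuMat] using congrFun (congrFun hskew _) _

lemma col_cvec_nonsing_inv {ψ : Matrix (Fin (2*n)) (Fin (2*n)) S} (hskew : ψᵀ = -ψ)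
    (hψ : IsUnit ψ) : col (cvec ψ⁻¹) = -col (dvec ψ) := by
  ext i j
  simpa [cvec, dvec] using congrFun (congrFun (nonsing_inv_transpose_of_skew hskew hψ) _) _

lemma cvec_dvec_relations (hn : 0 < n) (h2 : IsUnit (2 : S))
    {ψ : Matrix (Fin (2*n)) (Fin (2*n)) S} (hskew : ψᵀ = -ψ) (hψ : IsUnit ψ) :
    (col (cvec ψ))ᵀ * col (dvec ψ) = 1 ∧ nuMat ψ * col (dvec ψ) = 0 := by
  have h := congrArg (blockEquiv hn) (mul_nonsing_inv ψ ((isUnit_iff_isUnit_det ψ).mp hψ))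
  rw [map_mul, map_one, blockEquiv_of_skew hn h2 hskew,
    blockEquiv_of_skew hn h2 (nonsing_inv_transpose_of_skew hskew hψ),
    col_cvec_nonsing_inv hskew hψ] at h
  simpa using skewBlocks_mul_eq_one h

noncomputable def cmatMulParam (ψ : Matrix (Fin (2*n)) (Fin (2*n)) S) (u w : Fin (2*n-1) → S) :
    Fin (2*n-1) → S :=
  u + w + (u ⬝ᵥ nuMat ψ *ᵥ w) • dvec ψ

lemma col_cmatMulParam (ψ : Matrix (Fin (2*n)) (Fin (2*n)) S) (u w : Fin (2*n-1) → S) :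
    col (cmatMulParam ψ u w) =
      col u + col w + col (dvec ψ) * ((col u)ᵀ * nuMat ψ * col w) := by
  ext i j
  simp only [cmatMulParam, dotProduct, mulVec, mul_comm, Finset.mul_sum, replicateCol_apply,
    Pi.add_apply, Pi.smul_apply, smul_eq_mul, mul_left_comm, transpose_replicateCol,
    Matrix.add_apply, mul_apply, Finset.univ_unique, Fin.default_eq_zero, replicateRow_apply,
    Finset.sum_const, Finset.card_singleton, one_smul, add_right_inj]
  exact Finset.sum_comm

lemma Cmat_mul (h2 : IsUnit (2 : S)) {ψ : Matrix (Fin (2*n)) (Fin (2*n)) S} (hskew : ψᵀ = -ψ)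
    (hψ : IsUnit ψ) (u w : Fin (2*n-1) → S) :
    Cmat ψ u * Cmat ψ w = Cmat ψ (cmatMulParam ψ u w) :=
  eq_of_blockEquiv_eq fun hn => by
    rw [map_mul, blockEquiv_Cmat, blockEquiv_Cmat, blockEquiv_Cmat, col_cmatMulParam,
      cBlocks_mul (nuMat_transpose_s13 hskew) (cvec_dvec_relations hn h2 hskew hψ).2]

lemma cmatMulParam_neg_self (h2 : IsUnit (2 : S)) {ψ : Matrix (Fin (2*n)) (Fin (2*n)) S}
    (hskew : ψᵀ = -ψ) (u : Fin (2*n-1) → S) : cmatMulParam ψ u (-u) = 0 := by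
  simp [cmatMulParam, mulVec_neg, dotProduct_mulVec_self_eq_zero_s13 h2 (nuMat_transpose_s13 hskew)]

lemma Cmat_zero (ψ : Matrix (Fin (2*n)) (Fin (2*n)) S) : Cmat ψ 0 = 1 :=
  eq_of_blockEquiv_eq fun hn => by simp [blockEquiv_Cmat, cBlocks]

lemma Cmat_mul_neg (h2 : IsUnit (2 : S)) {ψ : Matrix (Fin (2*n)) (Fin (2*n)) S}
    (hskew : ψᵀ = -ψ) (hψ : IsUnit ψ) (u : Fin (2*n-1) → S) :
    Cmat ψ u * Cmat ψ (-u) = 1 := by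
  rw [Cmat_mul h2 hskew hψ, cmatMulParam_neg_self h2 hskew, Cmat_zero]

lemma Cmat_transpose_mul_mul (h2 : IsUnit (2 : S)) {ψ : Matrix (Fin (2*n)) (Fin (2*n)) S}
    (hskew : ψᵀ = -ψ) (hψ : IsUnit ψ) (v : Fin (2*n-1) → S) :
    (Cmat ψ v)ᵀ * ψ * Cmat ψ v = ψ :=
  eq_of_blockEquiv_eq fun hn => by
    obtain ⟨hcd, hνd⟩ := cvec_dvec_relations hn h2 hskew hψ
    rw [map_mul, map_mul, blockEquiv_transpose, blockEquiv_Cmat, blockEquiv_of_skew hn h2 hskew]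
    exact cBlocks_transpose_mul_skewBlocks_mul (nuMat_transpose_s13 hskew) hcd hνd
      (transpose_mul_mul_self_eq_zero h2 (nuMat_transpose_s13 hskew) _)

lemma map_Cmat {T : Type*} [CommRing T] (f : S →+* T) {ψ : Matrix (Fin (2*n)) (Fin (2*n)) S}
    (hψ : IsUnit ψ) (v : Fin (2*n-1) → S) : (Cmat ψ v).map f = Cmat (ψ.map f) (f ∘ v) := by
  ext i j
  simp only [Cmat, alphaMat, dvec, nuMat, map_nonsing_inv f hψ, map_apply, of_apply]
  split_ifs <;> simp [one_apply, apply_ite f, map_sum]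

lemma map_cmatMulParam {T : Type*} [CommRing T] (f : S →+* T)
    {ψ : Matrix (Fin (2*n)) (Fin (2*n)) S} (hψ : IsUnit ψ) (u w : Fin (2*n-1) → S) :
    f ∘ cmatMulParam ψ u w = cmatMulParam (ψ.map f) (f ∘ u) (f ∘ w) := by
  ext i
  simp [cmatMulParam, dvec, nuMat, map_nonsing_inv f hψ, dotProduct, mulVec, map_sum]

lemma Rmat_eq_transpose_Cmat_nonsing_inv {ψ : Matrix (Fin (2*n)) (Fin (2*n)) S}
    (hskew : ψᵀ = -ψ) (hψ : IsUnit ψ) (v : Fin (2*n-1) → S) :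
    Rmat ψ v = (Cmat ψ⁻¹ v)ᵀ := by
  have hs : ∀ i j, ψ j i = -ψ i j := fun i j => by simpa using congrFun (congrFun hskew i) j
  have hs' : ∀ i j, ψ⁻¹ j i = -ψ⁻¹ i j := fun i j => by
    simpa using congrFun (congrFun (nonsing_inv_transpose_of_skew hskew hψ) i) j
  ext i j
  simp only [Rmat, Cmat, betaMat, alphaMat, transpose_apply, of_apply]
  split_ifs <;> simp only [muMat, of_apply, cvec, Matrix.add_apply, one_apply, Fin.mk.injEq,
    dvec, nonsing_inv_nonsing_inv _ ((isUnit_iff_isUnit_det ψ).mp hψ), nuMat, eq_comm,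
    add_right_inj]
  rw [hs _ ⟨0, by omega⟩, Finset.mul_sum, Finset.sum_mul]
  refine Finset.sum_congr rfl fun x _ => ?_
  rw [hs' _ ⟨x.1 + 1, by omega⟩]
  ring

lemma Rmat_transpose_mul_mul (h2 : IsUnit (2 : S)) {ψ : Matrix (Fin (2*n)) (Fin (2*n)) S}
    (hskew : ψᵀ = -ψ) (hψ : IsUnit ψ) (v : Fin (2*n-1) → S) :
    (Rmat ψ v)ᵀ * ψ * Rmat ψ v = ψ := by
  rw [Rmat_eq_transpose_Cmat_nonsing_inv hskew hψ, transpose_transpose]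
  exact mul_mul_transpose_of_transpose_mul_inv_mul hψ <| Cmat_transpose_mul_mul h2
    (nonsing_inv_transpose_of_skew hskew hψ) (isUnit_nonsing_inv_iff.mpr hψ) v

lemma Rmat_zero (ψ : Matrix (Fin (2*n)) (Fin (2*n)) S) : Rmat ψ 0 = 1 := by
  ext i j
  simp only [Rmat, Pi.zero_apply, dite_eq_ite, betaMat, mul_zero, Finset.sum_const_zero,
    zero_mul, Matrix.add_apply, one_apply, Fin.ext_iff, of_apply, add_zero]
  split_ifs <;> first | rfl | omega

lemma map_Rmat {T : Type*} [CommRing T] (f : S →+* T) {ψ : Matrix (Fin (2*n)) (Fin (2*n)) S}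
    (hψ : IsUnit ψ) (v : Fin (2*n-1) → S) : (Rmat ψ v).map f = Rmat (ψ.map f) (f ∘ v) := by
  ext i j
  simp only [Rmat, betaMat, cvec, muMat, map_nonsing_inv f hψ, map_apply, of_apply]
  split_ifs <;> simp [one_apply, apply_ite f, map_sum]

end Generators

section Subgroups

variable {S : Type*} [CommRing S] {n : ℕ}

lemma REsp_eq_relNormalClosure (ψ : Matrix (Fin (2*n)) (Fin (2*n)) S) (I : Ideal S) :
    REsp ψ I = relNormalClosure (Esp ψ) (EspIdeal ψ I) :=
  rfl

lemma Esp_le_Sp (h2 : IsUnit (2 : S)) {ψ : Matrix (Fin (2*n)) (Fin (2*n)) S} (hskew : ψᵀ = -ψ)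
    (hψ : IsUnit ψ) : Esp ψ ≤ Sp ψ := by
  rw [Esp, closure_le]
  rintro g ⟨v, hg | hg⟩ <;> change (g : Matrix _ _ S)ᵀ * ψ * (g : Matrix _ _ S) = ψ <;>
    rw [hg]
  exacts [Cmat_transpose_mul_mul h2 hskew hψ v, Rmat_transpose_mul_mul h2 hskew hψ v]

lemma Esp_inf_SpRel_eq_Esp_inf_congrKer (h2 : IsUnit (2 : S))
    {ψ : Matrix (Fin (2*n)) (Fin (2*n)) S} (hskew : ψᵀ = -ψ) (hψ : IsUnit ψ) (I : Ideal S) :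
    Esp ψ ⊓ SpRel ψ I = Esp ψ ⊓ congrKer S (2*n) I := by
  rw [SpRel, ← inf_assoc, inf_of_le_left (Esp_le_Sp h2 hskew hψ)]

lemma EspIdeal_le_Esp (ψ : Matrix (Fin (2*n)) (Fin (2*n)) S) (I : Ideal S) :
    EspIdeal ψ I ≤ Esp ψ :=
  closure_mono fun _ ⟨v, _, hg⟩ => ⟨v, hg⟩

lemma EspIdeal_le_congrKer {ψ : Matrix (Fin (2*n)) (Fin (2*n)) S} (hψ : IsUnit ψ)
    (I : Ideal S) : EspIdeal ψ I ≤ congrKer S (2*n) I := by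
  rw [EspIdeal, closure_le]
  rintro g ⟨v, hv, hg⟩
  have hv0 : Ideal.Quotient.mk I ∘ v = 0 :=
    funext fun i => Ideal.Quotient.eq_zero_iff_mem.mpr (hv i)
  refine MonoidHom.mem_ker.mpr (Units.ext ?_)
  change (g : Matrix (Fin (2*n)) (Fin (2*n)) S).map (Ideal.Quotient.mk I) = 1
  rcases hg with hg | hg <;> rw [hg]
  · rw [map_Cmat _ hψ, hv0, Cmat_zero]
  · rw [map_Rmat _ hψ, hv0, Rmat_zero]

lemma REsp_le_Esp_inf_congrKer {ψ : Matrix (Fin (2*n)) (Fin (2*n)) S} (hψ : IsUnit ψ)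
    (I : Ideal S) : REsp ψ I ≤ Esp ψ ⊓ congrKer S (2*n) I :=
  REsp_eq_relNormalClosure ψ I ▸
    relNormalClosure_le (le_inf (EspIdeal_le_Esp ψ I) (EspIdeal_le_congrKer hψ I))
    fun _ hh _ hx => mem_inf.mpr ⟨mul_mem (mul_mem hh (mem_inf.mp hx).1) (inv_mem hh),
      (MonoidHom.normal_ker _).conj_mem _ (mem_inf.mp hx).2 _⟩

end Subgroups

section Retraction

variable {S : Type*} [CommRing S] {n : ℕ} {ε : S →+* S} {ψ : Matrix (Fin (2*n)) (Fin (2*n)) S}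

lemma comp_neg_comp_of_comp_eq (hε : ε.comp ε = ε) (v : Fin (2*n-1) → S) :
    ε ∘ (-(ε ∘ v)) = -(ε ∘ v) :=
  funext fun i => by simpa using RingHom.congr_fun hε (v i)

lemma exists_Cmat_eq_mul_map (h2 : IsUnit (2 : S)) (hskew : ψᵀ = -ψ) (hψ : IsUnit ψ)
    (hε : ε.comp ε = ε) (hψε : ψ.map ε = ψ) (v : Fin (2*n-1) → S) :
    ∃ u, (∀ i, u i ∈ RingHom.ker ε) ∧ Cmat ψ v = Cmat ψ u * (Cmat ψ v).map ε := by
  refine ⟨cmatMulParam ψ v (-(ε ∘ v)), fun i => RingHom.mem_ker.mpr ?_, ?_⟩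
  · rw [← Function.comp_apply (f := ε), map_cmatMulParam ε hψ, hψε,
      comp_neg_comp_of_comp_eq hε, cmatMulParam_neg_self h2 hskew, Pi.zero_apply]
  · rw [map_Cmat ε hψ, hψε, ← Cmat_mul h2 hskew hψ, Matrix.mul_assoc,
      mul_eq_one_comm.mp (Cmat_mul_neg h2 hskew hψ _), Matrix.mul_one]

lemma exists_Cmat_eq_map_mul (h2 : IsUnit (2 : S)) (hskew : ψᵀ = -ψ) (hψ : IsUnit ψ)
    (hε : ε.comp ε = ε) (hψε : ψ.map ε = ψ) (v : Fin (2*n-1) → S) :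
    ∃ u, (∀ i, u i ∈ RingHom.ker ε) ∧ Cmat ψ v = (Cmat ψ v).map ε * Cmat ψ u := by
  refine ⟨cmatMulParam ψ (-(ε ∘ v)) v, fun i => RingHom.mem_ker.mpr ?_, ?_⟩
  · have h0 : cmatMulParam ψ (-(ε ∘ v)) (ε ∘ v) = 0 := by
      simpa only [neg_neg] using cmatMulParam_neg_self h2 hskew (-(ε ∘ v))
    rw [← Function.comp_apply (f := ε), map_cmatMulParam ε hψ, hψε,
      comp_neg_comp_of_comp_eq hε, h0, Pi.zero_apply]
  · rw [map_Cmat ε hψ, hψε, ← Cmat_mul h2 hskew hψ, ← Matrix.mul_assoc,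
      Cmat_mul_neg h2 hskew hψ, Matrix.one_mul]

lemma exists_Rmat_eq_mul_map (h2 : IsUnit (2 : S)) (hskew : ψᵀ = -ψ) (hψ : IsUnit ψ)
    (hε : ε.comp ε = ε) (hψε : ψ.map ε = ψ) (v : Fin (2*n-1) → S) :
    ∃ u, (∀ i, u i ∈ RingHom.ker ε) ∧ Rmat ψ v = Rmat ψ u * (Rmat ψ v).map ε := by
  obtain ⟨u, hu, h⟩ := exists_Cmat_eq_map_mul h2 (nonsing_inv_transpose_of_skew hskew hψ)
    (isUnit_nonsing_inv_iff.mpr hψ) hε (by rw [← map_nonsing_inv ε hψ, hψε]) v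
  refine ⟨u, hu, ?_⟩
  simp only [Rmat_eq_transpose_Cmat_nonsing_inv hskew hψ]
  conv_lhs => rw [h]
  rw [transpose_mul, transpose_map]

lemma map_mem_Esp_and_mul_inv_mem_EspIdeal (h2 : IsUnit (2 : S)) (hskew : ψᵀ = -ψ)
    (hψ : IsUnit ψ) (hε : ε.comp ε = ε) (hψε : ψ.map ε = ψ)
    {s : (Matrix (Fin (2*n)) (Fin (2*n)) S)ˣ}
    (hs : ∃ v, (s : Matrix _ _ S) = Cmat ψ v ∨ (s : Matrix _ _ S) = Rmat ψ v) :
    Units.map ε.mapMatrix.toMonoidHom s ∈ Esp ψ ∧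
      s * (Units.map ε.mapMatrix.toMonoidHom s)⁻¹ ∈ EspIdeal ψ (RingHom.ker ε) := by
  have hmap : ((Units.map ε.mapMatrix.toMonoidHom s : (Matrix _ _ S)ˣ) : Matrix _ _ S) =
      (s : Matrix (Fin (2*n)) (Fin (2*n)) S).map ε := rfl
  obtain ⟨v, hs | hs⟩ := hs
  · obtain ⟨u, hu, hfac⟩ := exists_Cmat_eq_mul_map h2 hskew hψ hε hψε v
    refine ⟨subset_closure ⟨ε ∘ v, Or.inl ?_⟩, subset_closure ⟨u, hu, Or.inl ?_⟩⟩
    · rw [hmap, hs, map_Cmat ε hψ, hψε]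
    · rw [Units.val_mul, hs, hfac, ← hs, ← hmap, Units.mul_inv_cancel_right]
  · obtain ⟨u, hu, hfac⟩ := exists_Rmat_eq_mul_map h2 hskew hψ hε hψε v
    refine ⟨subset_closure ⟨ε ∘ v, Or.inr ?_⟩, subset_closure ⟨u, hu, Or.inr ?_⟩⟩
    · rw [hmap, hs, map_Rmat ε hψ, hψε]
    · rw [Units.val_mul, hs, hfac, ← hs, ← hmap, Units.mul_inv_cancel_right]

lemma Esp_inf_congrKer_le_REsp (h2 : IsUnit (2 : S)) (hskew : ψᵀ = -ψ) (hψ : IsUnit ψ)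
    (hε : ε.comp ε = ε) (hψε : ψ.map ε = ψ) :
    Esp ψ ⊓ congrKer S (2*n) (RingHom.ker ε) ≤ REsp ψ (RingHom.ker ε) := by
  rintro g ⟨hgE, hgK⟩
  rw [REsp_eq_relNormalClosure]
  exact mem_relNormalClosure_of_retraction _
    (fun s hs => map_mem_Esp_and_mul_inv_mem_EspIdeal h2 hskew hψ hε hψε hs) hgE
    (Units.ext (map_eq_one_of_mem_congrKer ε le_rfl hgK))

theorem REsp_eq_Esp_inf_SpRel_of_retraction (h2 : IsUnit (2 : S)) (hskew : ψᵀ = -ψ)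
    (hψ : IsUnit ψ) (hε : ε.comp ε = ε) (hψε : ψ.map ε = ψ) :
    REsp ψ (RingHom.ker ε) = Esp ψ ⊓ SpRel ψ (RingHom.ker ε) := by
  rw [Esp_inf_SpRel_eq_Esp_inf_congrKer h2 hskew hψ]
  exact le_antisymm (REsp_le_Esp_inf_congrKer hψ _)
    (Esp_inf_congrKer_le_REsp h2 hskew hψ hε hψε)

end Retraction

open Polynomial in
lemma ker_C_comp_evalRingHom_zero {R : Type*} [CommRing R] :
    RingHom.ker ((C : R →+* R[X]).comp (evalRingHom 0)) = Ideal.span {X} := by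
  ext p
  simp [Ideal.mem_span_singleton, X_dvd_iff, coeff_zero_eq_eval_zero]

/-- for `R = 2R` and `φ` invertible skew-symmetric of size `2n`,
`ESp_{φ⊗R[X]}(R[X],(X)) = ESp_{φ⊗R[X]}(R[X]) ∩ Sp_{φ⊗R[X]}(R[X],(X))`. -/
theorem resp_poly_X_eq_esp_inter_sprel {R : Type*} [CommRing R]
    (h2 : IsUnit (2 : R)) (n : ℕ)
    (φ : Matrix (Fin (2*n)) (Fin (2*n)) R) (hskew : φᵀ = -φ) (hinv : IsUnit φ) :
    REsp (φ.map (Polynomial.C : R →+* Polynomial R))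
        (Ideal.span {(Polynomial.X : Polynomial R)}) =
      Esp (φ.map (Polynomial.C : R →+* Polynomial R)) ⊓
        SpRel (φ.map (Polynomial.C : R →+* Polynomial R))
          (Ideal.span {(Polynomial.X : Polynomial R)}) := by
  open Polynomial in
  set ε : R[X] →+* R[X] := C.comp (evalRingHom 0)
  have hεC : ε.comp C = C := RingHom.ext fun r => by simp [ε]
  rw [← ker_C_comp_evalRingHom_zero]
  refine REsp_eq_Esp_inf_SpRel_of_retraction ?_ ?_ (hinv.map C.mapMatrix) ?_ ?_
  · simpa only [map_ofNat] using h2.map C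
  · rw [← transpose_map, hskew, Matrix.map_neg _ (map_neg C)]
  · exact ringHom_ext (fun r => by simp) (by simp)
  · rw [Matrix.map_map, ← RingHom.coe_comp, hεC]

end PaperESp
end

section
/- Let R be a commutative ring with unity, let n ≥ 2, and let ε ∈ E_{2n}(R). Then there exists ε_0 ∈ E_{2n−1}(R) such that ε^t ψ_n ε = (1 ⊥ ε_0)^t ψ_n (1 ⊥ ε_0). -/
/- Common definitions: symplectic groups with respect to an invertible
   skew-symmetric (alternating) matrix, elementary symplectic groups,
   Pfaffian, standard symplectic matrix, elementary linear groups. -/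

namespace PaperESp

open Matrix

variable {R : Type*} [CommRing R]

/-
Call `A` good if `Aᵀ ψ A = Pᵀ ψ P` for some `P ∈ 1 ⊥ E_{2n-1}(R)`. The identity is good, and
good matrices stay good under right multiplication by `1 ⊥ E_{2n-1}(R)`, which contains every
`E_ij(a)` with `i, j ≠ 1`; so it suffices that `(1 ⊥ ε₀) E_ij(a)` is good when `i = 1` or `j = 1`.
Moved to the left of `1 ⊥ ε₀`, `E_1j(a)` becomes a first-row transvection `1 + e₁ yᵀ` and
`E_i1(a)` a first-column transvection `1 + x e₁ᵀ`, so these must be shown good. As `ψ` is alternating,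
`(1 + x yᵀ)ᵀ ψ (1 + x yᵀ) = ψ + (ψx) yᵀ - y (ψx)ᵀ`, and because `ψ e₁ = -e₂`, `ψ e₂ = e₁` this
form equals that of a second-column (resp. second-row) transvection whose vector vanishes in the
first two coordinates; such transvections lie in `1 ⊥ E_{2n-1}(R)`. Indices here are 1-based,
while in the code `e₁ = Pi.single 0 1` and `e₂ = Pi.single 1 1`.
-/

section RankOne

variable {m : Type*} [DecidableEq m]

theorem single_eq_vecMulVec_single_one_left (i j : m) (a : R) :
    single i j a = vecMulVec (Pi.single i 1) (Pi.single j a) := by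
  ext u v
  by_cases hi : i = u <;> by_cases hj : j = v <;> simp_all [vecMulVec_apply]

theorem single_eq_vecMulVec_single_one_right (i j : m) (a : R) :
    single i j a = vecMulVec (Pi.single i a) (Pi.single j 1) := by
  ext u v
  by_cases hi : i = u <;> by_cases hj : j = v <;> simp_all [vecMulVec_apply]

variable [Fintype m]

theorem vecMulVec_single_one_eq_sum (x : m → R) (j : m) :
    vecMulVec x (Pi.single j 1) = ∑ i, single i j (x i) := by
  ext u v
  by_cases hv : v = j <;> simp [hv, vecMulVec_apply, Matrix.sum_apply, single_apply, Ne.symm]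

theorem single_one_vecMulVec_eq_sum (j : m) (x : m → R) :
    vecMulVec (Pi.single j 1) x = ∑ i, single j i (x i) := by
  ext u v
  by_cases hu : u = j <;> simp [hu, vecMulVec_apply, Matrix.sum_apply, single_apply, Ne.symm]

omit [DecidableEq m] in
theorem transpose_mul_mul_eq_of_eq {A B : Matrix m m R} (J C : Matrix m m R)
    (h : Aᵀ * J * A = Bᵀ * J * B) : (A * C)ᵀ * J * (A * C) = (B * C)ᵀ * J * (B * C) :=
  calc (A * C)ᵀ * J * (A * C) = Cᵀ * (Aᵀ * J * A) * C := by
        simp only [transpose_mul, Matrix.mul_assoc]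
    _ = (B * C)ᵀ * J * (B * C) := by
        rw [h]; simp only [transpose_mul, Matrix.mul_assoc]

theorem transpose_one_add_vecMulVec_mul_mul {J : Matrix m m R} (hJ : Jᵀ = -J) {x : m → R}
    (hx : x ⬝ᵥ J *ᵥ x = 0) (y : m → R) :
    (1 + vecMulVec x y)ᵀ * J * (1 + vecMulVec x y)
      = J + vecMulVec (J *ᵥ x) y - vecMulVec y (J *ᵥ x) := by
  have hyxJ : vecMulVec y x * J = -vecMulVec y (J *ᵥ x) := by
    rw [vecMulVec_mul, ← mulVec_transpose, hJ, neg_mulVec, vecMulVec_neg]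
  have hyxJxy : vecMulVec y x * J * vecMulVec x y = 0 := by
    rw [vecMulVec_mul, vecMulVec_mul_vecMulVec, ← dotProduct_mulVec, hx, zero_smul,
      vecMulVec_zero]
  rw [transpose_add, transpose_one, transpose_vecMulVec]
  calc (1 + vecMulVec y x) * J * (1 + vecMulVec x y)
      = J + vecMulVec y x * J + J * vecMulVec x y + vecMulVec y x * J * vecMulVec x y := by
        noncomm_ring
    _ = _ := by rw [hyxJxy, hyxJ, mul_vecMulVec]; abel

end RankOne

theorem one_add_sum_mem_of_mul_eq_zero {A ι : Type*} [Ring A] (S : Submonoid A)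
    (s : Finset ι) (f : ι → A) (hf : ∀ i ∈ s, 1 + f i ∈ S)
    (hff : ∀ i ∈ s, ∀ k ∈ s, f i * f k = 0) : 1 + ∑ i ∈ s, f i ∈ S := by
  classical
  induction s using Finset.induction_on with
  | empty => simp [S.one_mem]
  | insert a s has ih =>
    have hfa : f a * ∑ i ∈ s, f i = 0 := by
      rw [Finset.mul_sum]
      exact Finset.sum_eq_zero fun k hk =>
        hff a (Finset.mem_insert_self a s) k (Finset.mem_insert_of_mem hk)
    have hprod : (1 + f a) * (1 + ∑ i ∈ s, f i) = 1 + ∑ i ∈ insert a s, f i := by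
      rw [Finset.sum_insert has, mul_add, mul_one, add_mul, one_mul, hfa]; abel
    rw [← hprod]
    exact S.mul_mem (hf a (Finset.mem_insert_self a s))
      (ih (fun i hi => hf i (Finset.mem_insert_of_mem hi))
        (fun i hi k hk => hff i (Finset.mem_insert_of_mem hi) k (Finset.mem_insert_of_mem hk)))

section Transvections

variable {m : Type*} [Fintype m] [DecidableEq m]

theorem one_add_vecMulVec_single_one_mem (S : Submonoid (Matrix m m R)) {x : m → R} {j : m}
    (hxj : x j = 0) (hS : ∀ i, x i ≠ 0 → 1 + single i j (x i) ∈ S) :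
    1 + vecMulVec x (Pi.single j 1) ∈ S := by
  classical
  rw [vecMulVec_single_one_eq_sum, ← Finset.sum_filter_ne_zero]
  have hx : ∀ i ∈ Finset.univ.filter (fun i => single i j (x i) ≠ 0), x i ≠ 0 :=
    fun i hi h => (Finset.mem_filter.mp hi).2 (by rw [h, single_zero])
  refine one_add_sum_mem_of_mul_eq_zero S _ _ (fun i hi => hS i (hx i hi)) fun i _ k hk => ?_
  exact single_mul_single_of_ne _ _ _ _ (fun h : j = k => hx k hk (h ▸ hxj)) _

theorem one_add_single_one_vecMulVec_mem (S : Submonoid (Matrix m m R)) {q : m → R} {j : m}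
    (hqj : q j = 0) (hS : ∀ i, q i ≠ 0 → 1 + single j i (q i) ∈ S) :
    1 + vecMulVec (Pi.single j 1) q ∈ S := by
  classical
  rw [single_one_vecMulVec_eq_sum, ← Finset.sum_filter_ne_zero]
  have hq : ∀ i ∈ Finset.univ.filter (fun i => single j i (q i) ≠ 0), q i ≠ 0 :=
    fun i hi h => (Finset.mem_filter.mp hi).2 (by rw [h, single_zero])
  refine one_add_sum_mem_of_mul_eq_zero S _ _ (fun i hi => hS i (hq i hi)) fun i hi k _ => ?_
  exact single_mul_single_of_ne _ _ _ _ (fun h : i = j => hq i hi (h ▸ hqj)) _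

theorem one_add_single_mul_one_add_single_neg {i j : m} (hij : i ≠ j) (a : R) :
    (1 + single i j a) * (1 + single i j (-a)) = 1 :=
  (transvection_mul_transvection_same i j hij a (-a)).trans (by
    rw [add_neg_cancel, transvection_zero])

end Transvections

theorem exists_mem_Egrp_val_eq {m : ℕ} {i j : Fin m} (hij : i ≠ j) (a : R) :
    ∃ g ∈ Egrp R m, (g : Matrix (Fin m) (Fin m) R) = 1 + single i j a :=
  ⟨⟨_, _, one_add_single_mul_one_add_single_neg hij a,
      by simpa using one_add_single_mul_one_add_single_neg hij (-a)⟩,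
    Subgroup.subset_closure ⟨i, j, a, hij, rfl⟩, rfl⟩

theorem Fin.sum_univ_eq_zero_add {M : Type*} [AddCommMonoid M] {N : ℕ} [NeZero N]
    (f : Fin N → M) :
    ∑ i, f i = f 0 + ∑ k : Fin (N - 1), f ⟨k + 1, by have := k.2; omega⟩ := by
  obtain ⟨N, rfl⟩ := Nat.exists_eq_succ_of_ne_zero (NeZero.ne N)
  exact Fin.sum_univ_succ f

section OnePerp

variable {n : ℕ}

theorem onePerp_one : onePerp (n := n) (1 : Matrix (Fin (2*n-1)) (Fin (2*n-1)) R) = 1 := by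
  ext i j
  simp only [onePerp, of_apply, one_apply, Fin.ext_iff]
  split_ifs <;> first | rfl | omega

theorem onePerp_mul [NeZero n] (α β : Matrix (Fin (2*n-1)) (Fin (2*n-1)) R) :
    onePerp (n := n) α * onePerp β = onePerp (α * β) := by
  ext i j
  rw [mul_apply, Fin.sum_univ_eq_zero_add]
  by_cases hi : i = 0 <;> by_cases hj : j = 0 <;> simp [onePerp, hi, hj, mul_apply]

theorem onePerp_row_zero [NeZero n] (β : Matrix (Fin (2*n-1)) (Fin (2*n-1)) R) :
    (onePerp (n := n) β).row 0 = Pi.single 0 1 := by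
  ext j
  by_cases hj : j = 0 <;> simp [onePerp, hj]

theorem onePerp_col_zero [NeZero n] (β : Matrix (Fin (2*n-1)) (Fin (2*n-1)) R) :
    (onePerp (n := n) β).col 0 = Pi.single 0 1 := by
  ext i
  by_cases hi : i = 0 <;> simp [onePerp, hi]

theorem onePerp_mulVec_apply_zero [NeZero n] (β : Matrix (Fin (2*n-1)) (Fin (2*n-1)) R)
    (x : Fin (2*n) → R) : (onePerp (n := n) β *ᵥ x) 0 = x 0 := by
  change (onePerp β).row 0 ⬝ᵥ x = x 0
  rw [onePerp_row_zero, single_one_dotProduct]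

theorem vecMul_onePerp_apply_zero [NeZero n] (β : Matrix (Fin (2*n-1)) (Fin (2*n-1)) R)
    (x : Fin (2*n) → R) : (x ᵥ* onePerp (n := n) β) 0 = x 0 := by
  change x ⬝ᵥ (onePerp β).col 0 = x 0
  rw [onePerp_col_zero, dotProduct_single_one]

theorem onePerp_mul_one_add_vecMulVec_single_zero [NeZero n]
    (β : Matrix (Fin (2*n-1)) (Fin (2*n-1)) R) (x : Fin (2*n) → R) :
    onePerp (n := n) β * (1 + vecMulVec x (Pi.single 0 1))
      = (1 + vecMulVec (onePerp β *ᵥ x) (Pi.single 0 1)) * onePerp β := by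
  rw [mul_add, mul_one, mul_vecMulVec, add_mul, one_mul, vecMulVec_mul, single_one_vecMul,
    onePerp_row_zero]

theorem onePerp_mul_one_add_single_zero_vecMulVec [NeZero n]
    (u : (Matrix (Fin (2*n-1)) (Fin (2*n-1)) R)ˣ) (z : Fin (2*n) → R) :
    onePerp (n := n) ↑u * (1 + vecMulVec (Pi.single 0 1) z)
      = (1 + vecMulVec (Pi.single 0 1) (z ᵥ* onePerp ↑u⁻¹)) * onePerp ↑u := by
  rw [mul_add, mul_one, mul_vecMulVec, add_mul, one_mul, vecMulVec_mul, vecMul_vecMul,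
    onePerp_mul, Units.inv_mul, onePerp_one, vecMul_one, mulVec_single_one, onePerp_col_zero]

end OnePerp

section Psi

variable {n : ℕ}

theorem val_sigmaFn (i : Fin (2*n)) :
    (sigmaFn n i).1 = if i.1 % 2 = 0 then i.1 + 1 else i.1 - 1 := by
  unfold sigmaFn
  split_ifs <;> rfl

theorem sigmaFn_sigmaFn (i : Fin (2*n)) : sigmaFn n (sigmaFn n i) = i := by
  ext
  rw [val_sigmaFn, val_sigmaFn]
  split_ifs <;> omega

theorem odd_val_add_val_sigmaFn (i : Fin (2*n)) : Odd (i.1 + (sigmaFn n i).1) := by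
  rw [val_sigmaFn, Nat.odd_iff]
  split_ifs <;> omega

theorem psi_apply (i j : Fin (2*n)) :
    psi R n i j = if j = sigmaFn n i then (-1) ^ i.1 else 0 := by
  simp only [psi, of_apply, Fin.ext_iff, val_sigmaFn]
  rcases Nat.even_or_odd i.1 with hi | hi
  · have := Nat.even_iff.mp hi
    rw [hi.neg_one_pow]
    split_ifs <;> first | rfl | omega
  · have := Nat.odd_iff.mp hi
    rw [hi.neg_one_pow]
    split_ifs <;> first | rfl | omega

theorem psi_mulVec_apply (x : Fin (2*n) → R) (i : Fin (2*n)) :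
    (psi R n *ᵥ x) i = (-1) ^ i.1 * x (sigmaFn n i) := by
  simp [mulVec, dotProduct, psi_apply]

theorem psi_mulVec_psi_mulVec (x : Fin (2*n) → R) : psi R n *ᵥ (psi R n *ᵥ x) = -x := by
  ext i
  rw [psi_mulVec_apply, psi_mulVec_apply, sigmaFn_sigmaFn, ← mul_assoc, ← pow_add,
    (odd_val_add_val_sigmaFn i).neg_one_pow, Pi.neg_apply, neg_one_mul]

theorem psi_mulVec_single (k : Fin (2*n)) :
    psi R n *ᵥ Pi.single k 1 = (-1) ^ (sigmaFn n k).1 • Pi.single (sigmaFn n k) 1 := by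
  ext i
  rw [psi_mulVec_apply]
  by_cases hi : i = sigmaFn n k
  · subst hi; simp [sigmaFn_sigmaFn]
  · have : sigmaFn n i ≠ k := fun h => hi (h ▸ (sigmaFn_sigmaFn i).symm)
    simp [hi, this]

theorem psi_transpose : (psi R n)ᵀ = -psi R n := by
  ext i j
  simp only [transpose_apply, psi, of_apply, Matrix.neg_apply]
  split_ifs <;> first | omega | simp

-- Exhibits `ψ` as alternating (`x ⬝ᵥ ψ *ᵥ x = 0`), which skew-symmetry alone gives only when
-- `2` is invertible.
theorem psi_eq_sub_transpose : psi R n = (of fun i j : Fin (2*n) =>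
    if i.1 + 1 = j.1 ∧ j.1 % 2 = 1 then (1 : R) else 0) -
    (of fun i j : Fin (2*n) => if i.1 + 1 = j.1 ∧ j.1 % 2 = 1 then (1 : R) else 0)ᵀ := by
  ext i j
  simp only [psi, of_apply, Matrix.sub_apply, transpose_apply]
  split_ifs <;> first | omega | simp

theorem dotProduct_sub_transpose_mulVec_self {m : Type*} [Fintype m] (U : Matrix m m R)
    (x : m → R) : x ⬝ᵥ (U - Uᵀ) *ᵥ x = 0 := by
  rw [sub_mulVec, dotProduct_sub, mulVec_transpose, dotProduct_mulVec, dotProduct_comm, sub_self]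

theorem dotProduct_psi_mulVec_self (x : Fin (2*n) → R) : x ⬝ᵥ psi R n *ᵥ x = 0 := by
  rw [psi_eq_sub_transpose]
  exact dotProduct_sub_transpose_mulVec_self _ x

theorem transpose_one_add_vecMulVec_mul_psi_mul (x y : Fin (2*n) → R) :
    (1 + vecMulVec x y)ᵀ * psi R n * (1 + vecMulVec x y)
      = psi R n + vecMulVec (psi R n *ᵥ x) y - vecMulVec y (psi R n *ᵥ x) :=
  transpose_one_add_vecMulVec_mul_mul psi_transpose (dotProduct_psi_mulVec_self x) y

variable [NeZero n]

theorem val_one_fin_two_mul : (1 : Fin (2*n)).val = 1 := by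
  rw [Fin.val_one', Nat.mod_eq_of_lt]
  have := NeZero.pos n
  omega

theorem sigmaFn_zero : sigmaFn n 0 = 1 := by
  ext
  rw [val_sigmaFn, val_one_fin_two_mul]
  simp

theorem sigmaFn_one : sigmaFn n 1 = 0 := by
  rw [← sigmaFn_zero, sigmaFn_sigmaFn]

theorem psi_mulVec_apply_zero (x : Fin (2*n) → R) : (psi R n *ᵥ x) 0 = x 1 := by
  simp [psi_mulVec_apply, sigmaFn_zero]

theorem psi_mulVec_apply_one (x : Fin (2*n) → R) : (psi R n *ᵥ x) 1 = -x 0 := by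
  rw [psi_mulVec_apply, sigmaFn_one, val_one_fin_two_mul, pow_one, neg_one_mul]

theorem psi_mulVec_single_zero : psi R n *ᵥ Pi.single 0 1 = -Pi.single 1 1 := by
  rw [psi_mulVec_single, sigmaFn_zero, val_one_fin_two_mul, pow_one, neg_one_smul]

theorem psi_mulVec_single_one : psi R n *ᵥ Pi.single 1 1 = Pi.single 0 1 := by
  rw [psi_mulVec_single, sigmaFn_one, Fin.val_zero, pow_zero, one_smul]

end Psi

section Reduction

variable {n : ℕ} [NeZero n]

theorem one_ne_zero_fin_two_mul : (1 : Fin (2*n)) ≠ 0 := fun h => by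
  simpa [val_one_fin_two_mul] using congrArg Fin.val h

variable (R n) in
def onePerpEgrp : Submonoid (Matrix (Fin (2*n)) (Fin (2*n)) R) where
  carrier := {P | ∃ ε₀ ∈ Egrp R (2*n-1), onePerp (n := n) ε₀ = P}
  mul_mem' := by
    rintro _ _ ⟨a, ha, rfl⟩ ⟨b, hb, rfl⟩
    exact ⟨a * b, mul_mem ha hb, by rw [Units.val_mul, onePerp_mul]⟩
  one_mem' := ⟨1, one_mem _, onePerp_one⟩

theorem one_add_single_mem_onePerpEgrp {i j : Fin (2*n)} (hi : i ≠ 0) (hj : j ≠ 0) (hij : i ≠ j)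
    (a : R) : 1 + single i j a ∈ onePerpEgrp R n := by
  have hi' : i.1 ≠ 0 := Fin.val_ne_zero_iff.mpr hi
  have hj' : j.1 ≠ 0 := Fin.val_ne_zero_iff.mpr hj
  obtain ⟨g, hg, hgv⟩ := exists_mem_Egrp_val_eq (R := R) (m := 2*n-1)
    (i := ⟨i.1 - 1, by have := i.2; omega⟩) (j := ⟨j.1 - 1, by have := j.2; omega⟩)
    (by simp only [ne_eq, Fin.mk.injEq]; intro h; exact hij (Fin.ext (by omega))) a
  refine ⟨g, hg, ?_⟩
  rw [hgv]
  ext u v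
  simp only [onePerp, of_apply, Matrix.add_apply, one_apply, single_apply, Fin.ext_iff]
  split_ifs <;> first | rfl | omega | simp

theorem one_add_vecMulVec_single_one_mem_onePerpEgrp {x : Fin (2*n) → R} {j : Fin (2*n)}
    (hj : j ≠ 0) (hx0 : x 0 = 0) (hxj : x j = 0) :
    1 + vecMulVec x (Pi.single j 1) ∈ onePerpEgrp R n :=
  one_add_vecMulVec_single_one_mem _ hxj fun i hi =>
    one_add_single_mem_onePerpEgrp (by rintro rfl; exact hi hx0) hj (by rintro rfl; exact hi hxj) _

theorem one_add_single_one_vecMulVec_mem_onePerpEgrp {q : Fin (2*n) → R} {j : Fin (2*n)}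
    (hj : j ≠ 0) (hq0 : q 0 = 0) (hqj : q j = 0) :
    1 + vecMulVec (Pi.single j 1) q ∈ onePerpEgrp R n :=
  one_add_single_one_vecMulVec_mem _ hqj fun i hi =>
    one_add_single_mem_onePerpEgrp hj (by rintro rfl; exact hi hq0) (by rintro rfl; exact hi hqj) _

-- For invertible `A` this says `A ∈ Sp_ψ(R) · (1 ⊥ E_{2n-1}(R))`.
def PsiCongrOnePerp (A : Matrix (Fin (2*n)) (Fin (2*n)) R) : Prop :=
  ∃ P ∈ onePerpEgrp R n, Aᵀ * psi R n * A = Pᵀ * psi R n * P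

theorem psiCongrOnePerp_of_mem {P : Matrix (Fin (2*n)) (Fin (2*n)) R}
    (hP : P ∈ onePerpEgrp R n) : PsiCongrOnePerp P :=
  ⟨P, hP, rfl⟩

theorem PsiCongrOnePerp.of_eq {A B : Matrix (Fin (2*n)) (Fin (2*n)) R} (hB : PsiCongrOnePerp B)
    (h : Aᵀ * psi R n * A = Bᵀ * psi R n * B) : PsiCongrOnePerp A :=
  let ⟨P, hP, hBP⟩ := hB
  ⟨P, hP, h.trans hBP⟩

theorem PsiCongrOnePerp.mul_mem {A C : Matrix (Fin (2*n)) (Fin (2*n)) R} (hA : PsiCongrOnePerp A)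
    (hC : C ∈ onePerpEgrp R n) : PsiCongrOnePerp (A * C) :=
  let ⟨P, hP, hAP⟩ := hA
  ⟨P * C, (onePerpEgrp R n).mul_mem hP hC, transpose_mul_mul_eq_of_eq _ _ hAP⟩

theorem psiCongrOnePerp_one_add_single_zero_vecMulVec {y : Fin (2*n) → R} (hy : y 0 = 0) :
    PsiCongrOnePerp (1 + vecMulVec (Pi.single 0 1) y) := by
  -- `r ≡ y` modulo `e₂` and `ψ *ᵥ -(ψ *ᵥ r) = r`.
  set r := y - y 1 • Pi.single 1 1 with hr
  have hr0 : r 0 = 0 := by simp [hr, hy, one_ne_zero_fin_two_mul.symm]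
  have hr1 : r 1 = 0 := by simp [hr]
  refine ⟨1 + vecMulVec (-(psi R n *ᵥ r)) (Pi.single 1 1),
    one_add_vecMulVec_single_one_mem_onePerpEgrp one_ne_zero_fin_two_mul
      (by simp [psi_mulVec_apply_zero, hr1]) (by simp [psi_mulVec_apply_one, hr0]), ?_⟩
  rw [transpose_one_add_vecMulVec_mul_psi_mul, transpose_one_add_vecMulVec_mul_psi_mul,
    psi_mulVec_single_zero, mulVec_neg, psi_mulVec_psi_mulVec, neg_neg]
  ext u v
  simp [hr, vecMulVec_apply]
  ring

theorem psiCongrOnePerp_one_add_vecMulVec_single_zero {x : Fin (2*n) → R} (hx : x 0 = 0) :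
    PsiCongrOnePerp (1 + vecMulVec x (Pi.single 0 1)) := by
  -- `q ≡ -(ψ *ᵥ x)` modulo `e₁` and `ψ *ᵥ e₂ = e₁`.
  set q := x 1 • Pi.single 0 1 - psi R n *ᵥ x with hq
  have hq0 : q 0 = 0 := by simp [hq, psi_mulVec_apply_zero]
  have hq1 : q 1 = 0 := by simp [hq, psi_mulVec_apply_one, hx]
  refine ⟨1 + vecMulVec (Pi.single 1 1) q,
    one_add_single_one_vecMulVec_mem_onePerpEgrp one_ne_zero_fin_two_mul hq0 hq1, ?_⟩
  rw [transpose_one_add_vecMulVec_mul_psi_mul, transpose_one_add_vecMulVec_mul_psi_mul,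
    psi_mulVec_single_one]
  ext u v
  simp [hq, vecMulVec_apply]
  ring

theorem psiCongrOnePerp_onePerp_mul_one_add_single {u : (Matrix (Fin (2*n-1)) (Fin (2*n-1)) R)ˣ}
    (hu : u ∈ Egrp R (2*n-1)) {i j : Fin (2*n)} (hij : i ≠ j) (a : R) :
    PsiCongrOnePerp (onePerp (n := n) ↑u * (1 + single i j a)) := by
  have hP : onePerp (n := n) ↑u ∈ onePerpEgrp R n := ⟨u, hu, rfl⟩
  by_cases hi : i = 0
  · subst hi
    rw [single_eq_vecMulVec_single_one_left, onePerp_mul_one_add_single_zero_vecMulVec]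
    refine (psiCongrOnePerp_one_add_single_zero_vecMulVec ?_).mul_mem hP
    rw [vecMul_onePerp_apply_zero]
    exact Pi.single_eq_of_ne hij _
  by_cases hj : j = 0
  · subst hj
    rw [single_eq_vecMulVec_single_one_right, onePerp_mul_one_add_vecMulVec_single_zero]
    refine (psiCongrOnePerp_one_add_vecMulVec_single_zero ?_).mul_mem hP
    rw [onePerp_mulVec_apply_zero]
    exact Pi.single_eq_of_ne' hij _
  exact psiCongrOnePerp_of_mem (mul_mem hP (one_add_single_mem_onePerpEgrp hi hj hij a))

theorem PsiCongrOnePerp.mul_one_add_single {A : Matrix (Fin (2*n)) (Fin (2*n)) R}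
    (hA : PsiCongrOnePerp A) {i j : Fin (2*n)} (hij : i ≠ j) (a : R) :
    PsiCongrOnePerp (A * (1 + single i j a)) := by
  obtain ⟨_, ⟨u, hu, rfl⟩, h⟩ := hA
  exact (psiCongrOnePerp_onePerp_mul_one_add_single hu hij a).of_eq
    (transpose_mul_mul_eq_of_eq _ _ h)

end Reduction

/-- for `n ≥ 2` and `ε ∈ E_{2n}(R)` there is `ε₀ ∈ E_{2n-1}(R)` with
`εᵀ ψ_n ε = (1 ⊥ ε₀)ᵀ ψ_n (1 ⊥ ε₀)`. -/
theorem psi_conjugate_one_perp {R : Type*} [CommRing R] (n : ℕ) (hn : 2 ≤ n)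
    (ε : (Matrix (Fin (2*n)) (Fin (2*n)) R)ˣ) (hε : ε ∈ Egrp R (2*n)) :
    ∃ ε₀ ∈ Egrp R (2*n-1),
      (ε : Matrix (Fin (2*n)) (Fin (2*n)) R)ᵀ * psi R n *
          (ε : Matrix (Fin (2*n)) (Fin (2*n)) R) =
        (onePerp (n := n) (ε₀ : Matrix (Fin (2*n-1)) (Fin (2*n-1)) R))ᵀ * psi R n *
          onePerp (n := n) (ε₀ : Matrix (Fin (2*n-1)) (Fin (2*n-1)) R) := by
  have : NeZero n := ⟨by omega⟩
  suffices h : PsiCongrOnePerp (ε : Matrix (Fin (2*n)) (Fin (2*n)) R) by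
    obtain ⟨_, ⟨ε₀, hε₀, rfl⟩, h⟩ := h
    exact ⟨ε₀, hε₀, h⟩
  induction hε using Subgroup.closure_induction_right with
  | one => exact psiCongrOnePerp_of_mem (one_mem _)
  | mul_right _ _ g hg ih =>
    obtain ⟨i, j, a, hij, hg⟩ := hg
    rw [Units.val_mul, hg]
    exact ih.mul_one_add_single hij a
  | mul_inv_cancel _ _ g hg ih =>
    obtain ⟨i, j, a, hij, hg⟩ := hg
    rw [Units.val_mul, Units.inv_eq_of_mul_eq_one_right
      (hg ▸ one_add_single_mul_one_add_single_neg hij a)]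
    exact ih.mul_one_add_single hij (-a)

end PaperESp
end
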